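/- arXiv:1810.08084 — 3 statements merged into one kernel-verified Lean document; each statement's English description precedes it below -/
import Mathlib

section
/- Let $f$ be continuously differentiable on a neighborhood of $T$ and let $\chi(x,y,z)=\chi_c+\alpha\,(y-y_c)+\beta\,(z-z_c)$ be an affine function depending only on $y$ and $z$ (with $\chi_c,\alpha,\beta\in\mathbb{R}$). Then $\int_T f\,\chi\,dV=\chi_c\int_T f\,dV+\alpha\int_T \partial_y f\,E_y(y)\,dV+\beta\int_T \partial_z f\,E_z(z)\,dV$, where $E_y(y)=\frac{e_y^2}{8}-\frac{(y-y_c)^2}{2}$ and $E_z(z)=\frac{e_z^2}{8}-\frac{(z-z_c)^2}{2}$. -/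
/-!
Expanding `χ`, the claim splits into `χc ∫ f` and the two identities
`∫_T f (y - y_c) = ∫_T ∂_y f E_y` and `∫_T f (z - z_c) = ∫_T ∂_z f E_z`. Each is a one-dimensional
integration by parts: `E' = -(t - m)` and `E` vanishes at both ends of the interval, so the
boundary terms drop out. For `y` the integration in `y` must first be made the innermost one,
which Fubini allows since all integrands are continuous on the compact box.
-/

open MeasureTheory Set

theorem intervalIntegral_mul_sub_midpoint {a b : ℝ} {g g' : ℝ → ℝ} (hab : a ≤ b)
    (hg : ∀ t ∈ Icc a b, HasDerivAt g (g' t) t) (hg' : ContinuousOn g' (Icc a b)) :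
    ∫ t in a..b, g t * (t - (a + b) / 2)
      = ∫ t in a..b, g' t * ((b - a) ^ 2 / 8 - (t - (a + b) / 2) ^ 2 / 2) := by
  rw [uIcc_of_le hab |>.symm] at hg hg'
  have hE : ∀ t ∈ uIcc a b,
      HasDerivAt (fun t => (t - (a + b) / 2) ^ 2 / 2 - (b - a) ^ 2 / 8) (t - (a + b) / 2) t := by
    intro t _
    have h := (((hasDerivAt_id t).sub_const ((a + b) / 2)).pow 2).div_const 2
    exact (h.sub_const _).congr_deriv (by simp)
  rw [intervalIntegral.integral_mul_deriv_eq_deriv_mul hg hE (hg'.intervalIntegrable)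
    (continuousOn_id.sub continuousOn_const).intervalIntegrable]
  simp only [← neg_sub ((b - a) ^ 2 / 8), mul_neg, intervalIntegral.integral_neg]
  ring_nf

theorem setIntegral_Icc_prod {β : Type*} [MeasureSpace β] [SFinite (volume : Measure β)]
    {a b : ℝ} (hab : a ≤ b) {t : Set β} {G : ℝ × β → ℝ}
    (hG : IntegrableOn G (Icc a b ×ˢ t)) :
    ∫ p in Icc a b ×ˢ t, G p = ∫ x in a..b, ∫ y in t, G (x, y) := by
  rw [Measure.volume_eq_prod, setIntegral_prod G hG, integral_Icc_eq_integral_Ioc,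
    intervalIntegral.integral_of_le hab]

theorem intervalIntegral_intervalIntegral_swap {a b c d : ℝ} (hab : a ≤ b) (hcd : c ≤ d)
    {H : ℝ → ℝ → ℝ} (hH : ContinuousOn (fun p : ℝ × ℝ => H p.1 p.2) (Icc a b ×ˢ Icc c d)) :
    ∫ y in a..b, ∫ z in c..d, H y z = ∫ z in c..d, ∫ y in a..b, H y z := by
  have hint : IntegrableOn (fun p : ℝ × ℝ => H p.1 p.2) (Ioc a b ×ˢ Ioc c d) :=
    (hH.integrableOn_compact (isCompact_Icc.prod isCompact_Icc)).mono_set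
      (prod_mono Ioc_subset_Icc_self Ioc_subset_Icc_self)
  rw [IntegrableOn, Measure.volume_eq_prod, ← Measure.prod_restrict] at hint
  simp only [intervalIntegral.integral_of_le hab, intervalIntegral.integral_of_le hcd]
  exact integral_integral_swap hint

section Box

variable {x0 x1 y0 y1 z0 z1 : ℝ}

theorem setIntegral_box_eq_intervalIntegral_triple (hx : x0 ≤ x1) (hy : y0 ≤ y1) (hz : z0 ≤ z1)
    {f : ℝ → ℝ → ℝ → ℝ}
    (hf : ContinuousOn (fun p : ℝ × ℝ × ℝ => f p.1 p.2.1 p.2.2)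
      (Icc x0 x1 ×ˢ Icc y0 y1 ×ˢ Icc z0 z1)) :
    ∫ p in Icc x0 x1 ×ˢ Icc y0 y1 ×ˢ Icc z0 z1, f p.1 p.2.1 p.2.2
      = ∫ x in x0..x1, ∫ y in y0..y1, ∫ z in z0..z1, f x y z := by
  rw [setIntegral_Icc_prod hx (hf.integrableOn_compact
    (isCompact_Icc.prod (isCompact_Icc.prod isCompact_Icc)))]
  refine intervalIntegral.integral_congr fun x hx' => ?_
  rw [uIcc_of_le hx] at hx'
  have hslice := hf.uncurry_left (f := fun x (q : ℝ × ℝ) => f x q.1 q.2) x hx'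
  rw [setIntegral_Icc_prod hy (hslice.integrableOn_compact (isCompact_Icc.prod isCompact_Icc))]
  simp only [integral_Icc_eq_integral_Ioc, ← intervalIntegral.integral_of_le hz]

theorem intervalIntegral_triple_swap_inner (hx : x0 ≤ x1) (hy : y0 ≤ y1) (hz : z0 ≤ z1)
    {f : ℝ → ℝ → ℝ → ℝ}
    (hf : ContinuousOn (fun p : ℝ × ℝ × ℝ => f p.1 p.2.1 p.2.2)
      (Icc x0 x1 ×ˢ Icc y0 y1 ×ˢ Icc z0 z1)) :
    ∫ x in x0..x1, ∫ y in y0..y1, ∫ z in z0..z1, f x y z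
      = ∫ x in x0..x1, ∫ z in z0..z1, ∫ y in y0..y1, f x y z :=
  intervalIntegral.integral_congr fun _ hx' => intervalIntegral_intervalIntegral_swap hy hz <|
    hf.uncurry_left (f := fun x (q : ℝ × ℝ) => f x q.1 q.2) _ (uIcc_of_le hx ▸ hx')

theorem intervalIntegral_triple_add (hx : x0 ≤ x1) (hy : y0 ≤ y1) (hz : z0 ≤ z1)
    {f g : ℝ → ℝ → ℝ → ℝ}
    (hf : ContinuousOn (fun p : ℝ × ℝ × ℝ => f p.1 p.2.1 p.2.2)
      (Icc x0 x1 ×ˢ Icc y0 y1 ×ˢ Icc z0 z1))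
    (hg : ContinuousOn (fun p : ℝ × ℝ × ℝ => g p.1 p.2.1 p.2.2)
      (Icc x0 x1 ×ˢ Icc y0 y1 ×ˢ Icc z0 z1)) :
    ∫ x in x0..x1, ∫ y in y0..y1, ∫ z in z0..z1, (f x y z + g x y z)
      = (∫ x in x0..x1, ∫ y in y0..y1, ∫ z in z0..z1, f x y z)
        + ∫ x in x0..x1, ∫ y in y0..y1, ∫ z in z0..z1, g x y z := by
  have hK : IsCompact (Icc x0 x1 ×ˢ Icc y0 y1 ×ˢ Icc z0 z1) :=
    isCompact_Icc.prod (isCompact_Icc.prod isCompact_Icc)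
  rw [← setIntegral_box_eq_intervalIntegral_triple hx hy hz hf,
    ← setIntegral_box_eq_intervalIntegral_triple hx hy hz hg,
    ← integral_add (hf.integrableOn_compact hK) (hg.integrableOn_compact hK)]
  exact (setIntegral_box_eq_intervalIntegral_triple hx hy hz (f := fun x y z => f x y z + g x y z)
    (hf.add hg)).symm

theorem intervalIntegral_triple_mul_sub_midpoint (hx : x0 ≤ x1) (hy : y0 ≤ y1) (hz : z0 ≤ z1)
    {f f' : ℝ → ℝ → ℝ → ℝ}
    (hf : ∀ x ∈ Icc x0 x1, ∀ y ∈ Icc y0 y1, ∀ z ∈ Icc z0 z1, HasDerivAt (f x y) (f' x y z) z)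
    (hf' : ∀ x ∈ Icc x0 x1, ∀ y ∈ Icc y0 y1, ContinuousOn (f' x y) (Icc z0 z1)) :
    ∫ x in x0..x1, ∫ y in y0..y1, ∫ z in z0..z1, f x y z * (z - (z0 + z1) / 2)
      = ∫ x in x0..x1, ∫ y in y0..y1, ∫ z in z0..z1,
          f' x y z * ((z1 - z0) ^ 2 / 8 - (z - (z0 + z1) / 2) ^ 2 / 2) := by
  refine intervalIntegral.integral_congr fun x hx' =>
    intervalIntegral.integral_congr fun y hy' => ?_
  rw [uIcc_of_le hx] at hx'
  rw [uIcc_of_le hy] at hy'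
  exact intervalIntegral_mul_sub_midpoint hz (hf x hx' y hy') (hf' x hx' y hy')

end Box

section Curve

variable {E : Type*} [NormedAddCommGroup E] [NormedSpace ℝ E] {F : E → ℝ} {U : Set E}

theorem ContDiffOn.hasDerivAt_comp_curve (hF : ContDiffOn ℝ 1 F U) (hU : IsOpen U)
    {c : ℝ → E} {v : E} {t : ℝ} (hc : HasDerivAt c v t) (hct : c t ∈ U) :
    HasDerivAt (fun s => F (c s)) (fderiv ℝ F (c t) v) t :=
  ((hF.differentiableOn one_ne_zero _ hct).differentiableAt (hU.mem_nhds hct)).hasFDerivAt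
    |>.comp_hasDerivAt t hc

theorem ContDiffOn.continuousOn_deriv_comp_curve (hF : ContDiffOn ℝ 1 F U) (hU : IsOpen U)
    {γ : E → ℝ → E} {τ : E → ℝ} {v : E} (hγ : ∀ p, HasDerivAt (γ p) v (τ p))
    (hγτ : ∀ p, γ p (τ p) = p) :
    ContinuousOn (fun p => deriv (fun s => F (γ p s)) (τ p)) U := by
  have hFv := (hF.continuousOn_fderiv_of_isOpen hU le_rfl).clm_apply (continuousOn_const (c := v))
  refine hFv.congr fun p hp => ?_
  have h := hF.hasDerivAt_comp_curve hU (hγ p) ((hγτ p).symm ▸ hp)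
  rw [hγτ p] at h
  exact h.deriv

end Curve

section Partials

variable {x0 x1 y0 y1 z0 z1 : ℝ} {f : ℝ → ℝ → ℝ → ℝ} {U : Set (ℝ × ℝ × ℝ)}

theorem ContDiffOn.intervalIntegral_triple_mul_sub_midpoint_z (hx : x0 ≤ x1) (hy : y0 ≤ y1)
    (hz : z0 ≤ z1) (hU : IsOpen U) (hTU : Icc x0 x1 ×ˢ Icc y0 y1 ×ˢ Icc z0 z1 ⊆ U)
    (hf : ContDiffOn ℝ 1 (fun p : ℝ × ℝ × ℝ => f p.1 p.2.1 p.2.2) U) :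
    ∫ x in x0..x1, ∫ y in y0..y1, ∫ z in z0..z1, f x y z * (z - (z0 + z1) / 2)
      = ∫ x in x0..x1, ∫ y in y0..y1, ∫ z in z0..z1,
          deriv (fun r => f x y r) z * ((z1 - z0) ^ 2 / 8 - (z - (z0 + z1) / 2) ^ 2 / 2) := by
  have curve (x y z : ℝ) : HasDerivAt (fun r => (x, y, r)) ((0, 0, 1) : ℝ × ℝ × ℝ) z :=
    (hasDerivAt_const z x).prodMk ((hasDerivAt_const z y).prodMk (hasDerivAt_id z))
  have hFz : ContinuousOn (fun p : ℝ × ℝ × ℝ => deriv (fun r => f p.1 p.2.1 r) p.2.2) _ :=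
    (hf.continuousOn_deriv_comp_curve hU (fun p => curve p.1 p.2.1 p.2.2) fun _ => rfl).mono hTU
  refine intervalIntegral_triple_mul_sub_midpoint hx hy hz (fun x hx' y hy' z hz' => ?_)
    fun x hx' y hy' => hFz.comp (f := fun r => (x, y, r)) (by fun_prop) fun _ hz' => ⟨hx', hy', hz'⟩
  exact (hf.hasDerivAt_comp_curve hU (curve x y z) (hTU ⟨hx', hy', hz'⟩)).differentiableAt
    |>.hasDerivAt

theorem ContDiffOn.intervalIntegral_triple_mul_sub_midpoint_y (hx : x0 ≤ x1) (hy : y0 ≤ y1)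
    (hz : z0 ≤ z1) (hU : IsOpen U) (hTU : Icc x0 x1 ×ˢ Icc y0 y1 ×ˢ Icc z0 z1 ⊆ U)
    (hf : ContDiffOn ℝ 1 (fun p : ℝ × ℝ × ℝ => f p.1 p.2.1 p.2.2) U) :
    ∫ x in x0..x1, ∫ y in y0..y1, ∫ z in z0..z1, f x y z * (y - (y0 + y1) / 2)
      = ∫ x in x0..x1, ∫ y in y0..y1, ∫ z in z0..z1,
          deriv (fun s => f x s z) y * ((y1 - y0) ^ 2 / 8 - (y - (y0 + y1) / 2) ^ 2 / 2) := by
  have curve (x y z : ℝ) : HasDerivAt (fun s => (x, s, z)) ((0, 1, 0) : ℝ × ℝ × ℝ) y :=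
    (hasDerivAt_const y x).prodMk ((hasDerivAt_id y).prodMk (hasDerivAt_const y z))
  have hF : ContinuousOn (fun p : ℝ × ℝ × ℝ => f p.1 p.2.1 p.2.2) _ := hf.continuousOn.mono hTU
  have hFy : ContinuousOn (fun p : ℝ × ℝ × ℝ => deriv (fun s => f p.1 s p.2.2) p.2.1) _ :=
    (hf.continuousOn_deriv_comp_curve hU (fun p => curve p.1 p.2.1 p.2.2) fun _ => rfl).mono hTU
  rw [intervalIntegral_triple_swap_inner hx hy hz (hF.mul (by fun_prop)),
    intervalIntegral_triple_swap_inner hx hy hz (hFy.mul (by fun_prop))]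
  refine intervalIntegral_triple_mul_sub_midpoint (f := fun x z y => f x y z) hx hz hy
    (fun x hx' z hz' y hy' => ?_)
    fun x hx' z hz' => hFy.comp (f := fun s => (x, s, z)) (by fun_prop) fun _ hy' => ⟨hx', hy', hz'⟩
  exact (hf.hasDerivAt_comp_curve hU (curve x y z) (hTU ⟨hx', hy', hz'⟩)).differentiableAt
    |>.hasDerivAt

end Partials

theorem stmt9_general (x0 x1 y0 y1 z0 z1 : ℝ) (hx : x0 < x1) (hy : y0 < y1) (hz : z0 < z1)
    (ey ez yc zc : ℝ)
    (hey : ey = y1 - y0) (hez : ez = z1 - z0)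
    (hyc : yc = (y0 + y1) / 2) (hzc : zc = (z0 + z1) / 2)
    -- `f` is continuously differentiable on a neighborhood `U` of `T`
    (f : ℝ → ℝ → ℝ → ℝ) (U : Set (ℝ × ℝ × ℝ)) (hU : IsOpen U)
    (hTU : Set.Icc x0 x1 ×ˢ Set.Icc y0 y1 ×ˢ Set.Icc z0 z1 ⊆ U)
    (hf : ContDiffOn ℝ 1 (fun p : ℝ × ℝ × ℝ => f p.1 p.2.1 p.2.2) U)
    -- `χ` is an affine function of `y` and `z` only
    (χc α β : ℝ) :
    (∫ x in x0..x1, ∫ y in y0..y1, ∫ z in z0..z1,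
        f x y z * (χc + α * (y - yc) + β * (z - zc)))
    = χc * (∫ x in x0..x1, ∫ y in y0..y1, ∫ z in z0..z1, f x y z)
      + α * (∫ x in x0..x1, ∫ y in y0..y1, ∫ z in z0..z1,
          deriv (fun s => f x s z) y * (ey ^ 2 / 8 - (y - yc) ^ 2 / 2))
      + β * (∫ x in x0..x1, ∫ y in y0..y1, ∫ z in z0..z1,
          deriv (fun r => f x y r) z * (ez ^ 2 / 8 - (z - zc) ^ 2 / 2)) := by
  subst hey hez hyc hzc
  have hF : ContinuousOn (fun p : ℝ × ℝ × ℝ => f p.1 p.2.1 p.2.2) _ := hf.continuousOn.mono hTU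
  calc _ = ∫ x in x0..x1, ∫ y in y0..y1, ∫ z in z0..z1, (χc * f x y z
          + α * (f x y z * (y - (y0 + y1) / 2)) + β * (f x y z * (z - (z0 + z1) / 2))) := by
        congr! 6; ring
    _ = _ := by
        rw [intervalIntegral_triple_add hx.le hy.le hz.le (by fun_prop) (by fun_prop),
          intervalIntegral_triple_add hx.le hy.le hz.le (by fun_prop) (by fun_prop)]
        simp only [intervalIntegral.integral_const_mul,
          hf.intervalIntegral_triple_mul_sub_midpoint_z hx.le hy.le hz.le hU hTU,
          hf.intervalIntegral_triple_mul_sub_midpoint_y hx.le hy.le hz.le hU hTU]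

theorem stmt9 (x0 x1 y0 y1 z0 z1 : ℝ) (hx : x0 < x1) (hy : y0 < y1) (hz : z0 < z1)
    (ex ey ez xc yc zc : ℝ)
    (hex : ex = x1 - x0) (hey : ey = y1 - y0) (hez : ez = z1 - z0)
    (hxc : xc = (x0 + x1) / 2) (hyc : yc = (y0 + y1) / 2) (hzc : zc = (z0 + z1) / 2)
    -- `f` is continuously differentiable on a neighborhood `U` of `T`
    (f : ℝ → ℝ → ℝ → ℝ) (U : Set (ℝ × ℝ × ℝ)) (hU : IsOpen U)
    (hTU : Set.Icc x0 x1 ×ˢ Set.Icc y0 y1 ×ˢ Set.Icc z0 z1 ⊆ U)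
    (hf : ContDiffOn ℝ 1 (fun p : ℝ × ℝ × ℝ => f p.1 p.2.1 p.2.2) U)
    -- `χ` is an affine function of `y` and `z` only
    (χc α β : ℝ) :
    (∫ x in x0..x1, ∫ y in y0..y1, ∫ z in z0..z1,
        f x y z * (χc + α * (y - yc) + β * (z - zc)))
    = χc * (∫ x in x0..x1, ∫ y in y0..y1, ∫ z in z0..z1, f x y z)
      + α * (∫ x in x0..x1, ∫ y in y0..y1, ∫ z in z0..z1,
          deriv (fun s => f x s z) y * (ey ^ 2 / 8 - (y - yc) ^ 2 / 2))
      + β * (∫ x in x0..x1, ∫ y in y0..y1, ∫ z in z0..z1,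
          deriv (fun r => f x y r) z * (ez ^ 2 / 8 - (z - zc) ^ 2 / 2)) :=
  stmt9_general x0 x1 y0 y1 z0 z1 hx hy hz ey ez yc zc hey hez hyc hzc f U hU hTU hf χc α β
end

section
/- Let $q=(q_1,q_2,q_3)$ be twice continuously differentiable on a neighborhood of $T$. Then $\sum_{p=1}^{6}\int_{F_p}(q\cdot n_p)\big(\mathcal{S}(v_b)-v_{bp}\big)\,dS=\chi_1(M_1)\int_T\partial_x q_1\,dV+\chi_2(M_3)\int_T\partial_y q_2\,dV+\chi_3(M_5)\int_T\partial_z q_3\,dV+R_1$, where $R_1=c_3\int_T\partial_y\partial_x q_1\,E_y(y)\,dV+c_4\int_T\partial_z\partial_x q_1\,E_z(z)\,dV+c_2\int_T\partial_x\partial_y q_2\,E_x(x)\,dV+c_4\int_T\partial_z\partial_y q_2\,E_z(z)\,dV+c_2\int_T\partial_x\partial_z q_3\,E_x(x)\,dV+c_3\int_T\partial_y\partial_z q_3\,E_y(y)\,dV$, with kernels $E_x(x)=\frac{e_x^2}{8}-\frac{(x-x_c)^2}{2}$, $E_y(y)=\frac{e_y^2}{8}-\frac{(y-y_c)^2}{2}$,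 $E_z(z)=\frac{e_z^2}{8}-\frac{(z-z_c)^2}{2}$. -/
/-!
On the two faces `x = x₀` and `x = x₁` the weights `S - v_{b1}` and `S - v_{b2}` coincide (as
`c₂ e_x = v_{b2} - v_{b1}`) with the affine function `χ₁(M₁) + c₃ (y - y_c) + c₄ (z - z_c)` of
`(y, z)`, so by the fundamental theorem of calculus in `x` the two face integrals combine into
`∫_T ∂ₓq₁ · (χ₁(M₁) + c₃ (y - y_c) + c₄ (z - z_c))`. The two linear terms are then integrated by
parts in `y` and in `z` against `E_y` and `E_z`, which vanish at both end points and satisfy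
`E_y' = -(y - y_c)`. The other two pairs of faces are the same computation with the coordinates
permuted.
-/

open MeasureTheory Set Function intervalIntegral

section IteratedIntegrals

variable {E : Type*} [NormedAddCommGroup E] [NormedSpace ℝ E]

theorem continuousOn_intervalIntegral_of_continuousOn_prod {X : Type*} [TopologicalSpace X]
    {s : Set X} {f : X → ℝ → E} {a b : ℝ} (hab : a ≤ b)
    (hf : ContinuousOn (uncurry f) (s ×ˢ Icc a b)) :
    ContinuousOn (fun x => ∫ y in a..b, f x y) s := by
  rw [continuousOn_iff_continuous_domRestrict]
  have hg : Continuous (uncurry fun (x : s) y => f x (projIcc a b hab y)) :=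
    hf.comp_continuous (f := fun p : s × ℝ => ((p.1 : X), (projIcc a b hab p.2 : ℝ)))
      (by fun_prop) fun p => ⟨p.1.2, (projIcc a b hab p.2).2⟩
  refine (continuous_parametric_intervalIntegral_of_continuous' (μ := volume) hg a b).congr
    fun x => ?_
  refine integral_congr fun y hy => ?_
  rw [uIcc_of_le hab] at hy
  simp [projIcc_of_mem hab hy]

theorem intervalIntegral_comm_of_continuousOn {f : ℝ → ℝ → E} {a b c d : ℝ} (hab : a ≤ b)
    (hcd : c ≤ d) (hf : ContinuousOn (uncurry f) (Icc a b ×ˢ Icc c d)) :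
    ∫ x in a..b, ∫ y in c..d, f x y = ∫ y in c..d, ∫ x in a..b, f x y := by
  refine intervalIntegral_intervalIntegral_swap <|
    (hf.integrableOn_compact (isCompact_Icc.prod isCompact_Icc)).mono_set ?_
  rw [uIoc_of_le hab, uIoc_of_le hcd]
  exact prod_mono Ioc_subset_Icc_self Ioc_subset_Icc_self

theorem intervalIntegral_intervalIntegral_add {f g : ℝ → ℝ → E} {a b c d : ℝ} (hab : a ≤ b)
    (hcd : c ≤ d) (hf : ContinuousOn (uncurry f) (Icc a b ×ˢ Icc c d))
    (hg : ContinuousOn (uncurry g) (Icc a b ×ˢ Icc c d)) :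
    ∫ x in a..b, ∫ y in c..d, (f x y + g x y) =
      (∫ x in a..b, ∫ y in c..d, f x y) + ∫ x in a..b, ∫ y in c..d, g x y := by
  rw [← integral_add
    ((continuousOn_intervalIntegral_of_continuousOn_prod hcd hf).intervalIntegrable_of_Icc hab)
    ((continuousOn_intervalIntegral_of_continuousOn_prod hcd hg).intervalIntegrable_of_Icc hab)]
  refine integral_congr fun x hx => ?_
  rw [uIcc_of_le hab] at hx
  have slice {h : ℝ → ℝ → E} (hh : ContinuousOn (uncurry h) (Icc a b ×ˢ Icc c d)) :
      IntervalIntegrable (h x) volume c d :=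
    (hh.comp (continuous_const.prodMk continuous_id).continuousOn
      fun _ hy => ⟨hx, hy⟩).intervalIntegrable_of_Icc hcd
  exact integral_add (slice hf) (slice hg)

variable {a₁ b₁ a₂ b₂ a₃ b₃ : ℝ} {f g : ℝ → ℝ → ℝ → E}

theorem continuousOn_intervalIntegral₃_inner (h₃ : a₃ ≤ b₃)
    (hf : ContinuousOn ↿f (Icc a₁ b₁ ×ˢ Icc a₂ b₂ ×ˢ Icc a₃ b₃)) :
    ContinuousOn (fun p : ℝ × ℝ => ∫ z in a₃..b₃, f p.1 p.2 z) (Icc a₁ b₁ ×ˢ Icc a₂ b₂) :=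
  continuousOn_intervalIntegral_of_continuousOn_prod h₃ <|
    hf.comp (by fun_prop : Continuous fun p : (ℝ × ℝ) × ℝ => (p.1.1, p.1.2, p.2)).continuousOn
      fun _ hp => ⟨hp.1.1, hp.1.2, hp.2⟩

theorem integral₃_comm_inner (h₁ : a₁ ≤ b₁) (h₂ : a₂ ≤ b₂) (h₃ : a₃ ≤ b₃)
    (hf : ContinuousOn ↿f (Icc a₁ b₁ ×ˢ Icc a₂ b₂ ×ˢ Icc a₃ b₃)) :
    ∫ x in a₁..b₁, ∫ y in a₂..b₂, ∫ z in a₃..b₃, f x y z =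
      ∫ x in a₁..b₁, ∫ z in a₃..b₃, ∫ y in a₂..b₂, f x y z := by
  refine integral_congr fun x hx => intervalIntegral_comm_of_continuousOn h₂ h₃ ?_
  rw [uIcc_of_le h₁] at hx
  exact hf.comp (by fun_prop : Continuous fun p : ℝ × ℝ => (x, p)).continuousOn
    fun _ hp => ⟨hx, hp⟩

theorem integral₃_comm_outer (h₁ : a₁ ≤ b₁) (h₂ : a₂ ≤ b₂) (h₃ : a₃ ≤ b₃)
    (hf : ContinuousOn ↿f (Icc a₁ b₁ ×ˢ Icc a₂ b₂ ×ˢ Icc a₃ b₃)) :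
    ∫ x in a₁..b₁, ∫ y in a₂..b₂, ∫ z in a₃..b₃, f x y z =
      ∫ y in a₂..b₂, ∫ x in a₁..b₁, ∫ z in a₃..b₃, f x y z :=
  intervalIntegral_comm_of_continuousOn h₁ h₂ (continuousOn_intervalIntegral₃_inner h₃ hf)

theorem integral₃_comm_cycle (h₁ : a₁ ≤ b₁) (h₂ : a₂ ≤ b₂) (h₃ : a₃ ≤ b₃)
    (hf : ContinuousOn ↿f (Icc a₁ b₁ ×ˢ Icc a₂ b₂ ×ˢ Icc a₃ b₃)) :
    ∫ x in a₁..b₁, ∫ y in a₂..b₂, ∫ z in a₃..b₃, f x y z =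
      ∫ y in a₂..b₂, ∫ z in a₃..b₃, ∫ x in a₁..b₁, f x y z := by
  rw [integral₃_comm_outer h₁ h₂ h₃ hf]
  exact integral₃_comm_inner (f := fun y x z => f x y z) h₂ h₁ h₃ <|
    hf.comp (by fun_prop : Continuous fun p : ℝ × ℝ × ℝ => (p.2.1, p.1, p.2.2)).continuousOn
      fun _ hp => ⟨hp.2.1, hp.1, hp.2.2⟩

theorem integral₃_add (h₁ : a₁ ≤ b₁) (h₂ : a₂ ≤ b₂) (h₃ : a₃ ≤ b₃)
    (hf : ContinuousOn ↿f (Icc a₁ b₁ ×ˢ Icc a₂ b₂ ×ˢ Icc a₃ b₃))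
    (hg : ContinuousOn ↿g (Icc a₁ b₁ ×ˢ Icc a₂ b₂ ×ˢ Icc a₃ b₃)) :
    ∫ x in a₁..b₁, ∫ y in a₂..b₂, ∫ z in a₃..b₃, (f x y z + g x y z) =
      (∫ x in a₁..b₁, ∫ y in a₂..b₂, ∫ z in a₃..b₃, f x y z) +
        ∫ x in a₁..b₁, ∫ y in a₂..b₂, ∫ z in a₃..b₃, g x y z := by
  rw [← intervalIntegral_intervalIntegral_add (f := fun x y => ∫ z in a₃..b₃, f x y z)
    (g := fun x y => ∫ z in a₃..b₃, g x y z) h₁ h₂ (continuousOn_intervalIntegral₃_inner h₃ hf)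
    (continuousOn_intervalIntegral₃_inner h₃ hg)]
  refine integral_congr fun x hx => integral_congr fun y hy => ?_
  rw [uIcc_of_le h₁] at hx
  rw [uIcc_of_le h₂] at hy
  have slice {h : ℝ → ℝ → ℝ → E} (hh : ContinuousOn ↿h (Icc a₁ b₁ ×ˢ Icc a₂ b₂ ×ˢ Icc a₃ b₃)) :
      IntervalIntegrable (h x y) volume a₃ b₃ :=
    (hh.comp (by fun_prop : Continuous fun z : ℝ => (x, y, z)).continuousOn
      fun _ hz => ⟨hx, hy, hz⟩).intervalIntegrable_of_Icc h₃
  exact integral_add (slice hf) (slice hg)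

end IteratedIntegrals

theorem integral_deriv_mul_kernel {u : ℝ → ℝ} {a b : ℝ} (hab : a ≤ b)
    (hu : ∀ y ∈ Icc a b, DifferentiableAt ℝ u y) (hu' : ContinuousOn (deriv u) (Icc a b)) :
    ∫ y in a..b, deriv u y * ((b - a) ^ 2 / 8 - (y - (a + b) / 2) ^ 2 / 2) =
      ∫ y in a..b, u y * (y - (a + b) / 2) := by
  have hE (y : ℝ) : HasDerivAt (fun y => (b - a) ^ 2 / 8 - (y - (a + b) / 2) ^ 2 / 2)
      (-(y - (a + b) / 2)) y := by
    refine ((((hasDerivAt_id' y).sub_const ((a + b) / 2)).fun_pow 2 |>.div_const 2).const_sub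
      ((b - a) ^ 2 / 8)).congr_deriv ?_
    norm_num
  have := integral_mul_deriv_eq_deriv_mul (fun y _ => hE y)
    (fun y hy => (hu y (by rwa [uIcc_of_le hab] at hy)).hasDerivAt)
    ((by fun_prop : Continuous fun y => -(y - (a + b) / 2)).intervalIntegrable _ _)
    (hu'.intervalIntegrable_of_Icc hab)
  simp only [mul_comm (deriv u _)]
  rw [this]
  simp only [neg_mul, intervalIntegral.integral_neg, mul_comm (u _)]
  ring

section Partials

variable {E F : Type*} [NormedAddCommGroup E] [NormedSpace ℝ E] [NormedAddCommGroup F]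
  [NormedSpace ℝ F] {m n : WithTop ℕ∞}

theorem ContDiffOn.deriv_comp_curve {f : E → F} {U : Set E} (hU : IsOpen U) (hf : ContDiffOn ℝ n f U)
    (hmn : m + 1 ≤ n) {L : E → ℝ → E} {π : E → ℝ} {v : E} (hL : ∀ p, HasDerivAt (L p) v (π p))
    (hLπ : ∀ p, L p (π p) = p) :
    ContDiffOn ℝ m (fun p => deriv (fun s => f (L p s)) (π p)) U := by
  refine ((hf.fderiv_of_isOpen hU hmn).clm_apply (contDiffOn_const (c := v))).congr
    fun p hp => ?_
  have hfp : HasFDerivAt f (fderiv ℝ f p) (L p (π p)) := by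
    rw [hLπ]
    exact ((hf.differentiableOn (lt_of_lt_of_le (by positivity) hmn).ne').differentiableAt
      (hU.mem_nhds hp)).hasFDerivAt
  exact (hfp.comp_hasDerivAt (π p) (hL p)).deriv

variable {G : ℝ → ℝ → ℝ → F} {U : Set (ℝ × ℝ × ℝ)}

theorem ContDiffOn.deriv_fst (hU : IsOpen U) (hG : ContDiffOn ℝ n ↿G U) (hmn : m + 1 ≤ n) :
    ContDiffOn ℝ m (fun p : ℝ × ℝ × ℝ => deriv (fun s => G s p.2.1 p.2.2) p.1) U :=
  hG.deriv_comp_curve (L := fun p s => (s, p.2.1, p.2.2)) hU hmn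
    (fun _ => (hasDerivAt_id _).prodMk (hasDerivAt_const _ _)) fun _ => rfl

theorem ContDiffOn.deriv_snd (hU : IsOpen U) (hG : ContDiffOn ℝ n ↿G U) (hmn : m + 1 ≤ n) :
    ContDiffOn ℝ m (fun p : ℝ × ℝ × ℝ => deriv (fun s => G p.1 s p.2.2) p.2.1) U :=
  hG.deriv_comp_curve (L := fun p s => (p.1, s, p.2.2)) hU hmn
    (fun _ => (hasDerivAt_const _ _).prodMk ((hasDerivAt_id _).prodMk (hasDerivAt_const _ _)))
    fun _ => rfl

theorem ContDiffOn.deriv_thd (hU : IsOpen U) (hG : ContDiffOn ℝ n ↿G U) (hmn : m + 1 ≤ n) :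
    ContDiffOn ℝ m (fun p : ℝ × ℝ × ℝ => deriv (fun s => G p.1 p.2.1 s) p.2.2) U :=
  hG.deriv_comp_curve (L := fun p s => (p.1, p.2.1, s)) hU hmn
    (fun _ => (hasDerivAt_const _ _).prodMk ((hasDerivAt_const _ _).prodMk (hasDerivAt_id _)))
    fun _ => rfl

end Partials

section Faces

variable {a₁ b₁ a₂ b₂ a₃ b₃ : ℝ} {U : Set (ℝ × ℝ × ℝ)}

theorem integral₃_deriv_fst_mul {F : ℝ → ℝ → ℝ → ℝ} {w : ℝ → ℝ → ℝ} (h₁ : a₁ ≤ b₁)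
    (h₂ : a₂ ≤ b₂) (h₃ : a₃ ≤ b₃) (hU : IsOpen U)
    (hKU : Icc a₁ b₁ ×ˢ Icc a₂ b₂ ×ˢ Icc a₃ b₃ ⊆ U) (hF : ContDiffOn ℝ 1 ↿F U)
    (hw : ContinuousOn (uncurry w) (Icc a₂ b₂ ×ˢ Icc a₃ b₃)) :
    ∫ x in a₁..b₁, ∫ y in a₂..b₂, ∫ z in a₃..b₃, deriv (fun t => F t y z) x * w y z =
      ∫ y in a₂..b₂, ∫ z in a₃..b₃, (F b₁ y z - F a₁ y z) * w y z := by
  have hD := (hF.deriv_fst hU (m := 0) le_rfl).continuousOn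
  rw [integral₃_comm_cycle h₁ h₂ h₃]
  · refine integral_congr fun y hy => integral_congr fun z hz => ?_
    rw [uIcc_of_le h₂] at hy
    rw [uIcc_of_le h₃] at hz
    have hK : ∀ x ∈ uIcc a₁ b₁, ((x, y, z) : ℝ × ℝ × ℝ) ∈ U := fun x hx =>
      hKU ⟨by rwa [uIcc_of_le h₁] at hx, hy, hz⟩
    simp only [intervalIntegral.integral_mul_const]
    rw [integral_deriv_eq_sub (f := fun t => F t y z) fun x hx =>
      (((hF.differentiableOn one_ne_zero).differentiableAt (hU.mem_nhds (hK x hx))).comp x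
        (by fun_prop) : DifferentiableAt ℝ (↿F ∘ fun t => (t, y, z)) x)]
    exact (hD.comp (by fun_prop : Continuous fun x : ℝ => (x, y, z)).continuousOn
      hK).intervalIntegrable
  · exact (hD.mono hKU).mul <|
      hw.comp (by fun_prop : Continuous fun p : ℝ × ℝ × ℝ => p.2).continuousOn fun _ hp => hp.2

theorem integral₃_deriv_thd_mul_kernel {G : ℝ → ℝ → ℝ → ℝ} (h₁ : a₁ ≤ b₁) (h₂ : a₂ ≤ b₂)
    (h₃ : a₃ ≤ b₃) (hU : IsOpen U) (hKU : Icc a₁ b₁ ×ˢ Icc a₂ b₂ ×ˢ Icc a₃ b₃ ⊆ U)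
    (hG : ContDiffOn ℝ 1 ↿G U) :
    ∫ x in a₁..b₁, ∫ y in a₂..b₂, ∫ z in a₃..b₃,
        deriv (fun s => G x y s) z * ((b₃ - a₃) ^ 2 / 8 - (z - (a₃ + b₃) / 2) ^ 2 / 2) =
      ∫ x in a₁..b₁, ∫ y in a₂..b₂, ∫ z in a₃..b₃, G x y z * (z - (a₃ + b₃) / 2) := by
  have hD := (hG.deriv_thd hU (m := 0) le_rfl).continuousOn
  refine integral_congr fun x hx => integral_congr fun y hy => ?_
  rw [uIcc_of_le h₁] at hx
  rw [uIcc_of_le h₂] at hy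
  have hK : ∀ z ∈ Icc a₃ b₃, ((x, y, z) : ℝ × ℝ × ℝ) ∈ U := fun z hz => hKU ⟨hx, hy, hz⟩
  exact integral_deriv_mul_kernel h₃
    (fun z hz => (((hG.differentiableOn one_ne_zero).differentiableAt (hU.mem_nhds (hK z hz))).comp
      z (by fun_prop) : DifferentiableAt ℝ (↿G ∘ fun s => (x, y, s)) z))
    (hD.comp (by fun_prop : Continuous fun z : ℝ => (x, y, z)).continuousOn hK)

theorem integral₃_deriv_snd_mul_kernel {G : ℝ → ℝ → ℝ → ℝ} (h₁ : a₁ ≤ b₁) (h₂ : a₂ ≤ b₂)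
    (h₃ : a₃ ≤ b₃) (hU : IsOpen U) (hKU : Icc a₁ b₁ ×ˢ Icc a₂ b₂ ×ˢ Icc a₃ b₃ ⊆ U)
    (hG : ContDiffOn ℝ 1 ↿G U) :
    ∫ x in a₁..b₁, ∫ y in a₂..b₂, ∫ z in a₃..b₃,
        deriv (fun s => G x s z) y * ((b₂ - a₂) ^ 2 / 8 - (y - (a₂ + b₂) / 2) ^ 2 / 2) =
      ∫ x in a₁..b₁, ∫ y in a₂..b₂, ∫ z in a₃..b₃, G x y z * (y - (a₂ + b₂) / 2) := by
  have hσ : ContDiff ℝ 1 fun p : ℝ × ℝ × ℝ => (p.1, p.2.2, p.2.1) := by fun_prop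
  rw [integral₃_comm_inner h₁ h₂ h₃, integral₃_comm_inner h₁ h₂ h₃]
  · exact integral₃_deriv_thd_mul_kernel (G := fun x z y => G x y z) h₁ h₃ h₂
      (hU.preimage hσ.continuous) (fun p hp => hKU ⟨hp.1, hp.2.2, hp.2.1⟩)
      (hG.comp hσ.contDiffOn fun _ hp => hp)
  · exact (hG.continuousOn.mono hKU).mul (by fun_prop)
  · exact ((hG.deriv_snd hU (m := 0) le_rfl).continuousOn.mono hKU).mul (by fun_prop)

theorem integral_opposite_faces_fst {F : ℝ → ℝ → ℝ → ℝ} {w : ℝ → ℝ → ℝ} {A β γ : ℝ}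
    (h₁ : a₁ ≤ b₁) (h₂ : a₂ ≤ b₂) (h₃ : a₃ ≤ b₃) (hU : IsOpen U)
    (hKU : Icc a₁ b₁ ×ˢ Icc a₂ b₂ ×ˢ Icc a₃ b₃ ⊆ U) (hF : ContDiffOn ℝ 2 ↿F U)
    (hw : ∀ y z, w y z = A + β * (y - (a₂ + b₂) / 2) + γ * (z - (a₃ + b₃) / 2)) :
    (∫ y in a₂..b₂, ∫ z in a₃..b₃, -F a₁ y z * w y z) +
        ∫ y in a₂..b₂, ∫ z in a₃..b₃, F b₁ y z * w y z =
      A * (∫ x in a₁..b₁, ∫ y in a₂..b₂, ∫ z in a₃..b₃, deriv (fun t => F t y z) x) +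
        β * (∫ x in a₁..b₁, ∫ y in a₂..b₂, ∫ z in a₃..b₃,
          deriv (fun s => deriv (fun t => F t s z) x) y *
            ((b₂ - a₂) ^ 2 / 8 - (y - (a₂ + b₂) / 2) ^ 2 / 2)) +
        γ * (∫ x in a₁..b₁, ∫ y in a₂..b₂, ∫ z in a₃..b₃,
          deriv (fun s => deriv (fun t => F t y s) x) z *
            ((b₃ - a₃) ^ 2 / 8 - (z - (a₃ + b₃) / 2) ^ 2 / 2)) := by
  have hwc : ContinuousOn (uncurry w) (Icc a₂ b₂ ×ˢ Icc a₃ b₃) := by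
    rw [show uncurry w = _ from funext fun p => hw p.1 p.2]
    fun_prop
  have hface {c : ℝ} (hc : c ∈ Icc a₁ b₁) :
      ContinuousOn (uncurry (F c)) (Icc a₂ b₂ ×ˢ Icc a₃ b₃) :=
    hF.continuousOn.comp (by fun_prop : Continuous fun p : ℝ × ℝ => (c, p)).continuousOn
      fun _ hp => hKU ⟨hc, hp⟩
  have hD : ContDiffOn ℝ 1 (fun p : ℝ × ℝ × ℝ => deriv (fun t => F t p.2.1 p.2.2) p.1) U :=
    hF.deriv_fst hU (by norm_num)
  have hDc := hD.continuousOn.mono hKU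
  have hDy : ContinuousOn (fun p : ℝ × ℝ × ℝ =>
      deriv (fun t => F t p.2.1 p.2.2) p.1 * (p.2.1 - (a₂ + b₂) / 2)) _ := hDc.mul (by fun_prop)
  have hDz : ContinuousOn (fun p : ℝ × ℝ × ℝ =>
      deriv (fun t => F t p.2.1 p.2.2) p.1 * (p.2.2 - (a₃ + b₃) / 2)) _ := hDc.mul (by fun_prop)
  rw [integral₃_deriv_snd_mul_kernel (G := fun x y z => deriv (fun t => F t y z) x)
      h₁ h₂ h₃ hU hKU hD,
    integral₃_deriv_thd_mul_kernel (G := fun x y z => deriv (fun t => F t y z) x)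
      h₁ h₂ h₃ hU hKU hD]
  calc _ = ∫ y in a₂..b₂, ∫ z in a₃..b₃, (F b₁ y z - F a₁ y z) * w y z := by
        rw [← intervalIntegral_intervalIntegral_add h₂ h₃]
        · refine integral_congr fun y _ => integral_congr fun z _ => ?_
          ring
        · exact (hface (left_mem_Icc.2 h₁)).neg.mul hwc
        · exact (hface (right_mem_Icc.2 h₁)).mul hwc
    _ = ∫ x in a₁..b₁, ∫ y in a₂..b₂, ∫ z in a₃..b₃, deriv (fun t => F t y z) x * w y z :=
        (integral₃_deriv_fst_mul h₁ h₂ h₃ hU hKU (hF.of_le (by norm_num)) hwc).symm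
    _ = ∫ x in a₁..b₁, ∫ y in a₂..b₂, ∫ z in a₃..b₃, (A * deriv (fun t => F t y z) x +
          β * (deriv (fun t => F t y z) x * (y - (a₂ + b₂) / 2)) +
          γ * (deriv (fun t => F t y z) x * (z - (a₃ + b₃) / 2))) := by
        refine integral_congr fun x _ => integral_congr fun y _ => integral_congr fun z _ => ?_
        simp only [hw]
        ring
    _ = _ := by
        rw [integral₃_add h₁ h₂ h₃, integral₃_add h₁ h₂ h₃]
        · simp only [intervalIntegral.integral_const_mul]
        · exact continuousOn_const.mul hDc
        · exact continuousOn_const.mul hDy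
        · exact (continuousOn_const.mul hDc).add (continuousOn_const.mul hDy)
        · exact continuousOn_const.mul hDz

theorem integral_opposite_faces_snd {q : ℝ → ℝ → ℝ → ℝ} {w : ℝ → ℝ → ℝ} {A β γ : ℝ}
    (h₁ : a₁ ≤ b₁) (h₂ : a₂ ≤ b₂) (h₃ : a₃ ≤ b₃) (hU : IsOpen U)
    (hKU : Icc a₁ b₁ ×ˢ Icc a₂ b₂ ×ˢ Icc a₃ b₃ ⊆ U) (hq : ContDiffOn ℝ 2 ↿q U)
    (hw : ∀ x z, w x z = A + β * (x - (a₁ + b₁) / 2) + γ * (z - (a₃ + b₃) / 2)) :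
    (∫ x in a₁..b₁, ∫ z in a₃..b₃, -q x a₂ z * w x z) +
        ∫ x in a₁..b₁, ∫ z in a₃..b₃, q x b₂ z * w x z =
      A * (∫ x in a₁..b₁, ∫ y in a₂..b₂, ∫ z in a₃..b₃, deriv (fun s => q x s z) y) +
        β * (∫ x in a₁..b₁, ∫ y in a₂..b₂, ∫ z in a₃..b₃,
          deriv (fun t => deriv (fun s => q t s z) y) x *
            ((b₁ - a₁) ^ 2 / 8 - (x - (a₁ + b₁) / 2) ^ 2 / 2)) +
        γ * (∫ x in a₁..b₁, ∫ y in a₂..b₂, ∫ z in a₃..b₃,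
          deriv (fun r => deriv (fun s => q x s r) y) z *
            ((b₃ - a₃) ^ 2 / 8 - (z - (a₃ + b₃) / 2) ^ 2 / 2)) := by
  set σ : ℝ × ℝ × ℝ → ℝ × ℝ × ℝ := fun p => (p.2.1, p.1, p.2.2)
  have hσ : ContDiff ℝ 2 σ := by fun_prop
  have hV := hU.preimage hσ.continuous
  have hKV : Icc a₂ b₂ ×ˢ Icc a₁ b₁ ×ˢ Icc a₃ b₃ ⊆ σ ⁻¹' U := fun p hp =>
    hKU ⟨hp.2.1, hp.1, hp.2.2⟩
  have hF : ContDiffOn ℝ 2 ↿(fun y x z => q x y z) (σ ⁻¹' U) :=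
    hq.comp hσ.contDiffOn fun _ hp => hp
  have hD : ContDiffOn ℝ 1 ↿(fun y x z => deriv (fun s => q x s z) y) (σ ⁻¹' U) :=
    hF.deriv_fst hV (by norm_num)
  have key := integral_opposite_faces_fst h₂ h₁ h₃ hV hKV hF hw
  rw [integral₃_comm_outer h₂ h₁ h₃, integral₃_comm_outer h₂ h₁ h₃,
    integral₃_comm_outer h₂ h₁ h₃] at key
  · exact key
  · exact ((hD.deriv_thd hV (m := 0) le_rfl).continuousOn.mono hKV).mul (by fun_prop)
  · exact ((hD.deriv_snd hV (m := 0) le_rfl).continuousOn.mono hKV).mul (by fun_prop)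
  · exact hD.continuousOn.mono hKV

theorem integral_opposite_faces_thd {q : ℝ → ℝ → ℝ → ℝ} {w : ℝ → ℝ → ℝ} {A β γ : ℝ}
    (h₁ : a₁ ≤ b₁) (h₂ : a₂ ≤ b₂) (h₃ : a₃ ≤ b₃) (hU : IsOpen U)
    (hKU : Icc a₁ b₁ ×ˢ Icc a₂ b₂ ×ˢ Icc a₃ b₃ ⊆ U) (hq : ContDiffOn ℝ 2 ↿q U)
    (hw : ∀ x y, w x y = A + β * (x - (a₁ + b₁) / 2) + γ * (y - (a₂ + b₂) / 2)) :
    (∫ x in a₁..b₁, ∫ y in a₂..b₂, -q x y a₃ * w x y) +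
        ∫ x in a₁..b₁, ∫ y in a₂..b₂, q x y b₃ * w x y =
      A * (∫ x in a₁..b₁, ∫ y in a₂..b₂, ∫ z in a₃..b₃, deriv (fun r => q x y r) z) +
        β * (∫ x in a₁..b₁, ∫ y in a₂..b₂, ∫ z in a₃..b₃,
          deriv (fun t => deriv (fun r => q t y r) z) x *
            ((b₁ - a₁) ^ 2 / 8 - (x - (a₁ + b₁) / 2) ^ 2 / 2)) +
        γ * (∫ x in a₁..b₁, ∫ y in a₂..b₂, ∫ z in a₃..b₃,
          deriv (fun s => deriv (fun r => q x s r) z) y *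
            ((b₂ - a₂) ^ 2 / 8 - (y - (a₂ + b₂) / 2) ^ 2 / 2)) := by
  set σ : ℝ × ℝ × ℝ → ℝ × ℝ × ℝ := fun p => (p.2.1, p.2.2, p.1)
  have hσ : ContDiff ℝ 2 σ := by fun_prop
  have hV := hU.preimage hσ.continuous
  have hKV : Icc a₃ b₃ ×ˢ Icc a₁ b₁ ×ˢ Icc a₂ b₂ ⊆ σ ⁻¹' U := fun p hp =>
    hKU ⟨hp.2.1, hp.2.2, hp.1⟩
  have hF : ContDiffOn ℝ 2 ↿(fun z x y => q x y z) (σ ⁻¹' U) :=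
    hq.comp hσ.contDiffOn fun _ hp => hp
  have hD : ContDiffOn ℝ 1 ↿(fun z x y => deriv (fun r => q x y r) z) (σ ⁻¹' U) :=
    hF.deriv_fst hV (by norm_num)
  have key := integral_opposite_faces_fst h₃ h₁ h₂ hV hKV hF hw
  rw [integral₃_comm_cycle h₃ h₁ h₂, integral₃_comm_cycle h₃ h₁ h₂,
    integral₃_comm_cycle h₃ h₁ h₂] at key
  · exact key
  · exact ((hD.deriv_thd hV (m := 0) le_rfl).continuousOn.mono hKV).mul (by fun_prop)
  · exact ((hD.deriv_snd hV (m := 0) le_rfl).continuousOn.mono hKV).mul (by fun_prop)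
  · exact hD.continuousOn.mono hKV

end Faces

theorem stmt10_general (x0 x1 y0 y1 z0 z1 : ℝ) (hx : x0 < x1) (hy : y0 < y1) (hz : z0 < z1)
    (ex ey ez xc yc zc : ℝ)
    (hex : ex = x1 - x0) (hey : ey = y1 - y0) (hez : ez = z1 - z0)
    (hxc : xc = (x0 + x1) / 2) (hyc : yc = (y0 + y1) / 2) (hzc : zc = (z0 + z1) / 2)
    (vb1 vb2 vb3 vb4 vb5 vb6 : ℝ) (c1 c2 c3 c4 : ℝ)
    (hc2 : c2 = (vb2 - vb1) / ex) (hc3 : c3 = (vb4 - vb3) / ey) (hc4 : c4 = (vb6 - vb5) / ez)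
    (S : ℝ → ℝ → ℝ → ℝ)
    (hS : ∀ x y z : ℝ, S x y z = c1 + c2 * (x - xc) + c3 * (y - yc) + c4 * (z - zc))
    -- `q = (q1, q2, q3)` is twice continuously differentiable on a neighborhood `U` of `T`
    (q1 q2 q3 : ℝ → ℝ → ℝ → ℝ) (U : Set (ℝ × ℝ × ℝ)) (hU : IsOpen U)
    (hTU : Set.Icc x0 x1 ×ˢ Set.Icc y0 y1 ×ˢ Set.Icc z0 z1 ⊆ U)
    (hq1 : ContDiffOn ℝ 2 (fun p : ℝ × ℝ × ℝ => q1 p.1 p.2.1 p.2.2) U)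
    (hq2 : ContDiffOn ℝ 2 (fun p : ℝ × ℝ × ℝ => q2 p.1 p.2.1 p.2.2) U)
    (hq3 : ContDiffOn ℝ 2 (fun p : ℝ × ℝ × ℝ => q3 p.1 p.2.1 p.2.2) U)
    -- the remainder term `R₁`
    (R1 : ℝ)
    (hR1 : R1 =
      c3 * (∫ x in x0..x1, ∫ y in y0..y1, ∫ z in z0..z1,
        deriv (fun s => deriv (fun t => q1 t s z) x) y * (ey ^ 2 / 8 - (y - yc) ^ 2 / 2))
      + c4 * (∫ x in x0..x1, ∫ y in y0..y1, ∫ z in z0..z1,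
        deriv (fun r => deriv (fun t => q1 t y r) x) z * (ez ^ 2 / 8 - (z - zc) ^ 2 / 2))
      + c2 * (∫ x in x0..x1, ∫ y in y0..y1, ∫ z in z0..z1,
        deriv (fun t => deriv (fun s => q2 t s z) y) x * (ex ^ 2 / 8 - (x - xc) ^ 2 / 2))
      + c4 * (∫ x in x0..x1, ∫ y in y0..y1, ∫ z in z0..z1,
        deriv (fun r => deriv (fun s => q2 x s r) y) z * (ez ^ 2 / 8 - (z - zc) ^ 2 / 2))
      + c2 * (∫ x in x0..x1, ∫ y in y0..y1, ∫ z in z0..z1,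
        deriv (fun t => deriv (fun r => q3 t y r) z) x * (ex ^ 2 / 8 - (x - xc) ^ 2 / 2))
      + c3 * (∫ x in x0..x1, ∫ y in y0..y1, ∫ z in z0..z1,
        deriv (fun s => deriv (fun r => q3 x s r) z) y * (ey ^ 2 / 8 - (y - yc) ^ 2 / 2))) :
    (∫ y in y0..y1, ∫ z in z0..z1, (-(q1 x0 y z)) * (S x0 y z - vb1))
      + (∫ y in y0..y1, ∫ z in z0..z1, q1 x1 y z * (S x1 y z - vb2))
      + (∫ x in x0..x1, ∫ z in z0..z1, (-(q2 x y0 z)) * (S x y0 z - vb3))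
      + (∫ x in x0..x1, ∫ z in z0..z1, q2 x y1 z * (S x y1 z - vb4))
      + (∫ x in x0..x1, ∫ y in y0..y1, (-(q3 x y z0)) * (S x y z0 - vb5))
      + (∫ x in x0..x1, ∫ y in y0..y1, q3 x y z1 * (S x y z1 - vb6))
    = (S x0 yc zc - vb1) * (∫ x in x0..x1, ∫ y in y0..y1, ∫ z in z0..z1,
          deriv (fun t => q1 t y z) x)
      + (S xc y0 zc - vb3) * (∫ x in x0..x1, ∫ y in y0..y1, ∫ z in z0..z1,
          deriv (fun s => q2 x s z) y)
      + (S xc yc z0 - vb5) * (∫ x in x0..x1, ∫ y in y0..y1, ∫ z in z0..z1,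
          deriv (fun r => q3 x y r) z)
      + R1 := by
  subst hex hey hez hxc hyc hzc
  have hx1 : ∀ y z, S x1 y z - vb2 = S x0 y z - vb1 := fun y z => by
    rw [hS, hS, hc2]; field_simp [sub_ne_zero.2 hx.ne']; ring
  have hy1 : ∀ x z, S x y1 z - vb4 = S x y0 z - vb3 := fun x z => by
    rw [hS, hS, hc3]; field_simp [sub_ne_zero.2 hy.ne']; ring
  have hz1 : ∀ x y, S x y z1 - vb6 = S x y z0 - vb5 := fun x y => by
    rw [hS, hS, hc4]; field_simp [sub_ne_zero.2 hz.ne']; ring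
  have hfx := integral_opposite_faces_fst (F := q1) (w := fun y z => S x0 y z - vb1)
    (A := S x0 ((y0 + y1) / 2) ((z0 + z1) / 2) - vb1) (β := c3) (γ := c4)
    hx.le hy.le hz.le hU hTU hq1 fun y z => by rw [hS, hS]; ring
  have hfy := integral_opposite_faces_snd (q := q2) (w := fun x z => S x y0 z - vb3)
    (A := S ((x0 + x1) / 2) y0 ((z0 + z1) / 2) - vb3) (β := c2) (γ := c4)
    hx.le hy.le hz.le hU hTU hq2 fun x z => by rw [hS, hS]; ring
  have hfz := integral_opposite_faces_thd (q := q3) (w := fun x y => S x y z0 - vb5)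
    (A := S ((x0 + x1) / 2) ((y0 + y1) / 2) z0 - vb5) (β := c2) (γ := c3)
    hx.le hy.le hz.le hU hTU hq3 fun x y => by rw [hS, hS]; ring
  simp only [hx1, hy1, hz1]
  rw [hR1]
  linear_combination hfx + hfy + hfz

theorem stmt10 (x0 x1 y0 y1 z0 z1 : ℝ) (hx : x0 < x1) (hy : y0 < y1) (hz : z0 < z1)
    (ex ey ez xc yc zc F1 F3 F5 : ℝ)
    (hex : ex = x1 - x0) (hey : ey = y1 - y0) (hez : ez = z1 - z0)
    (hxc : xc = (x0 + x1) / 2) (hyc : yc = (y0 + y1) / 2) (hzc : zc = (z0 + z1) / 2)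
    (hF1 : F1 = ey * ez) (hF3 : F3 = ex * ez) (hF5 : F5 = ex * ey)
    (vb1 vb2 vb3 vb4 vb5 vb6 : ℝ) (c1 c2 c3 c4 : ℝ)
    (hc1 : c1 = (F1 * (vb1 + vb2) + F3 * (vb3 + vb4) + F5 * (vb5 + vb6)) / (2 * (F1 + F3 + F5)))
    (hc2 : c2 = (vb2 - vb1) / ex) (hc3 : c3 = (vb4 - vb3) / ey) (hc4 : c4 = (vb6 - vb5) / ez)
    (S : ℝ → ℝ → ℝ → ℝ)
    (hS : ∀ x y z : ℝ, S x y z = c1 + c2 * (x - xc) + c3 * (y - yc) + c4 * (z - zc))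
    -- `q = (q1, q2, q3)` is twice continuously differentiable on a neighborhood `U` of `T`
    (q1 q2 q3 : ℝ → ℝ → ℝ → ℝ) (U : Set (ℝ × ℝ × ℝ)) (hU : IsOpen U)
    (hTU : Set.Icc x0 x1 ×ˢ Set.Icc y0 y1 ×ˢ Set.Icc z0 z1 ⊆ U)
    (hq1 : ContDiffOn ℝ 2 (fun p : ℝ × ℝ × ℝ => q1 p.1 p.2.1 p.2.2) U)
    (hq2 : ContDiffOn ℝ 2 (fun p : ℝ × ℝ × ℝ => q2 p.1 p.2.1 p.2.2) U)
    (hq3 : ContDiffOn ℝ 2 (fun p : ℝ × ℝ × ℝ => q3 p.1 p.2.1 p.2.2) U)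
    -- the remainder term `R₁`
    (R1 : ℝ)
    (hR1 : R1 =
      c3 * (∫ x in x0..x1, ∫ y in y0..y1, ∫ z in z0..z1,
        deriv (fun s => deriv (fun t => q1 t s z) x) y * (ey ^ 2 / 8 - (y - yc) ^ 2 / 2))
      + c4 * (∫ x in x0..x1, ∫ y in y0..y1, ∫ z in z0..z1,
        deriv (fun r => deriv (fun t => q1 t y r) x) z * (ez ^ 2 / 8 - (z - zc) ^ 2 / 2))
      + c2 * (∫ x in x0..x1, ∫ y in y0..y1, ∫ z in z0..z1,
        deriv (fun t => deriv (fun s => q2 t s z) y) x * (ex ^ 2 / 8 - (x - xc) ^ 2 / 2))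
      + c4 * (∫ x in x0..x1, ∫ y in y0..y1, ∫ z in z0..z1,
        deriv (fun r => deriv (fun s => q2 x s r) y) z * (ez ^ 2 / 8 - (z - zc) ^ 2 / 2))
      + c2 * (∫ x in x0..x1, ∫ y in y0..y1, ∫ z in z0..z1,
        deriv (fun t => deriv (fun r => q3 t y r) z) x * (ex ^ 2 / 8 - (x - xc) ^ 2 / 2))
      + c3 * (∫ x in x0..x1, ∫ y in y0..y1, ∫ z in z0..z1,
        deriv (fun s => deriv (fun r => q3 x s r) z) y * (ey ^ 2 / 8 - (y - yc) ^ 2 / 2))) :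
    (∫ y in y0..y1, ∫ z in z0..z1, (-(q1 x0 y z)) * (S x0 y z - vb1))
      + (∫ y in y0..y1, ∫ z in z0..z1, q1 x1 y z * (S x1 y z - vb2))
      + (∫ x in x0..x1, ∫ z in z0..z1, (-(q2 x y0 z)) * (S x y0 z - vb3))
      + (∫ x in x0..x1, ∫ z in z0..z1, q2 x y1 z * (S x y1 z - vb4))
      + (∫ x in x0..x1, ∫ y in y0..y1, (-(q3 x y z0)) * (S x y z0 - vb5))
      + (∫ x in x0..x1, ∫ y in y0..y1, q3 x y z1 * (S x y z1 - vb6))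
    = (S x0 yc zc - vb1) * (∫ x in x0..x1, ∫ y in y0..y1, ∫ z in z0..z1,
          deriv (fun t => q1 t y z) x)
      + (S xc y0 zc - vb3) * (∫ x in x0..x1, ∫ y in y0..y1, ∫ z in z0..z1,
          deriv (fun s => q2 x s z) y)
      + (S xc yc z0 - vb5) * (∫ x in x0..x1, ∫ y in y0..y1, ∫ z in z0..z1,
          deriv (fun r => q3 x y r) z)
      + R1 :=
  stmt10_general x0 x1 y0 y1 z0 z1 hx hy hz ex ey ez xc yc zc hex hey hez hxc hyc hzc vb1 vb2 vb3
    vb4 vb5 vb6 c1 c2 c3 c4 hc2 hc3 hc4 S hS q1 q2 q3 U hU hTU hq1 hq2 hq3 R1 hR1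
end

section
/- Let $u$ be three times continuously differentiable on a neighborhood of $T$ and define $K_x(x)=\frac{e_x^2(x-x_0)}{6}-\frac{e_x(x-x_0)^2}{2}+\frac{(x-x_0)^3}{3}$. Then $\int_{F_1}u\,dS+\int_{F_2}u\,dS=\frac{2}{e_x}\int_T u\,dV+\frac{e_x}{6}\int_T \partial_x^2 u\,dV+\frac{1}{e_x}\int_T \partial_x^3 u\,K_x(x)\,dV$. -/
/-!
Along every line parallel to the `x`-axis this is the trapezoid rule with integral remainder.
With `e = x₁ - x₀`, the cubic kernel `K = (x - x₀)(x - x₁)(2x - x₀ - x₁)/6` satisfies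
`K(x₀) = K(x₁) = 0`, `K'(x₀) = K'(x₁) = e²/6`, `K''(x₀) = -e`, `K''(x₁) = e` and `K''' = 2`,
so three integrations by parts give
`∫ f''' K = e (f(x₀) + f(x₁)) - e²/6 ∫ f'' - 2 ∫ f`.
Integrating over the `(y, z)`-rectangle and exchanging the order of integration (Fubini) gives
the theorem; the integrands are continuous on the closed box because the iterated `x`-derivatives
of a `C³` function are partial derivatives, hence `C^(3-k)`.
-/

open MeasureTheory Set

noncomputable def trapezoidKernel (a b x : ℝ) : ℝ :=
  (b - a) ^ 2 * (x - a) / 6 - (b - a) * (x - a) ^ 2 / 2 + (x - a) ^ 3 / 3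

theorem continuous_trapezoidKernel (a b : ℝ) : Continuous (trapezoidKernel a b) := by
  unfold trapezoidKernel; fun_prop

theorem hasDerivAt_trapezoidKernel (a b x : ℝ) :
    HasDerivAt (trapezoidKernel a b) ((b - a) ^ 2 / 6 - (b - a) * (x - a) + (x - a) ^ 2) x := by
  have hs : HasDerivAt (fun x => x - a) 1 x := (hasDerivAt_id' x).sub_const a
  exact ((((hs.const_mul ((b - a) ^ 2)).div_const 6).fun_sub
    (((hs.fun_pow 2).const_mul (b - a)).div_const 2)).fun_add
      ((hs.fun_pow 3).div_const 3)).congr_deriv (by ring)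

theorem hasDerivAt_trapezoidKernel_deriv (a b x : ℝ) :
    HasDerivAt (fun x => (b - a) ^ 2 / 6 - (b - a) * (x - a) + (x - a) ^ 2) (2 * x - a - b) x := by
  have hs : HasDerivAt (fun x => x - a) 1 x := (hasDerivAt_id' x).sub_const a
  exact (((hasDerivAt_const x ((b - a) ^ 2 / 6)).fun_sub (hs.const_mul (b - a))).fun_add
    (hs.fun_pow 2)).congr_deriv (by ring)

theorem trapezoid_add_eq_intervalIntegral {f f' f'' f''' : ℝ → ℝ} {a b : ℝ} (hab : a ≠ b)
    (hf : ∀ x ∈ uIcc a b, HasDerivAt f (f' x) x)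
    (hf' : ∀ x ∈ uIcc a b, HasDerivAt f' (f'' x) x)
    (hf'' : ∀ x ∈ uIcc a b, HasDerivAt f'' (f''' x) x)
    (hf''' : ContinuousOn f''' (uIcc a b)) :
    f a + f b = ∫ x in a..b, (2 / (b - a) * f x + (b - a) / 6 * f'' x
      + 1 / (b - a) * (f''' x * trapezoidKernel a b x)) := by
  have hba : b - a ≠ 0 := sub_ne_zero.2 hab.symm
  set Φ : ℝ → ℝ := fun x => f'' x * trapezoidKernel a b x
    - f' x * ((b - a) ^ 2 / 6 - (b - a) * (x - a) + (x - a) ^ 2) + f x * (2 * x - a - b)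
  have hΦ : ∀ x ∈ uIcc a b, HasDerivAt (fun x => (b - a) / 6 * f' x + 1 / (b - a) * Φ x)
      (2 / (b - a) * f x + (b - a) / 6 * f'' x + 1 / (b - a) * (f''' x * trapezoidKernel a b x))
      x := by
    intro x hx
    have hlin : HasDerivAt (fun x => 2 * x - a - b) 2 x :=
      (((hasDerivAt_id' x).const_mul 2).sub_const a).sub_const b |>.congr_deriv (by ring)
    have hΦx : HasDerivAt Φ (f''' x * trapezoidKernel a b x + 2 * f x) x :=
      (((hf'' x hx).fun_mul (hasDerivAt_trapezoidKernel a b x)).fun_sub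
        ((hf' x hx).fun_mul (hasDerivAt_trapezoidKernel_deriv a b x))).fun_add
          ((hf x hx).fun_mul hlin) |>.congr_deriv (by ring)
    exact (((hf' x hx).const_mul ((b - a) / 6)).fun_add (hΦx.const_mul (1 / (b - a))))
      |>.congr_deriv (by field_simp; ring)
  have hcont : ContinuousOn (fun x => 2 / (b - a) * f x + (b - a) / 6 * f'' x
      + 1 / (b - a) * (f''' x * trapezoidKernel a b x)) (uIcc a b) := by
    have hfc : ContinuousOn f (uIcc a b) := fun x hx => (hf x hx).continuousAt.continuousWithinAt
    have hf''c : ContinuousOn f'' (uIcc a b) :=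
      fun x hx => (hf'' x hx).continuousAt.continuousWithinAt
    have := (continuous_trapezoidKernel a b).continuousOn (s := uIcc a b)
    fun_prop
  rw [intervalIntegral.integral_eq_sub_of_hasDerivAt hΦ hcont.intervalIntegrable]
  simp only [Φ, trapezoidKernel]
  field_simp
  ring

theorem ContDiffOn.trapezoid_add_eq_intervalIntegral {f : ℝ → ℝ} {V : Set ℝ} (hV : IsOpen V)
    (hf : ContDiffOn ℝ 3 f V) {a b : ℝ} (hab : a ≠ b) (habV : uIcc a b ⊆ V) :
    f a + f b = ∫ x in a..b, (2 / (b - a) * f x + (b - a) / 6 * deriv^[2] f x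
      + 1 / (b - a) * (deriv^[3] f x * trapezoidKernel a b x)) := by
  obtain ⟨hf₀, -, hf₁⟩ := (contDiffOn_succ_iff_deriv_of_isOpen (n := 2) hV).1 hf
  obtain ⟨hf₁, -, hf₂⟩ := (contDiffOn_succ_iff_deriv_of_isOpen (n := 1) hV).1 hf₁
  obtain ⟨hf₂, -, hf₃⟩ := (contDiffOn_succ_iff_deriv_of_isOpen (n := 0) hV).1 hf₂
  have hasDeriv {g : ℝ → ℝ} (hg : DifferentiableOn ℝ g V) (x : ℝ) (hx : x ∈ uIcc a b) :
      HasDerivAt g (deriv g x) x :=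
    (hg.differentiableAt (hV.mem_nhds (habV hx))).hasDerivAt
  exact _root_.trapezoid_add_eq_intervalIntegral hab (hasDeriv hf₀) (hasDeriv hf₁) (hasDeriv hf₂)
    (hf₃.continuousOn.mono habV)

section slice

variable {E G : Type*} [NormedAddCommGroup E] [NormedSpace ℝ E] [NormedAddCommGroup G]
  [NormedSpace ℝ G] {F : ℝ × E → G} {U : Set (ℝ × E)}

theorem ContDiffOn.deriv_fst_s16 {m : WithTop ℕ∞} (hU : IsOpen U) (hF : ContDiffOn ℝ (m + 1) F U) :
    ContDiffOn ℝ m (fun p : ℝ × E => deriv (fun t => F (t, p.2)) p.1) U := by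
  obtain ⟨hdF, -, hF'⟩ := (contDiffOn_succ_iff_fderiv_of_isOpen hU).1 hF
  refine (hF'.clm_apply contDiffOn_const (g := fun _ => ((1, 0) : ℝ × E))).congr fun p hp => ?_
  have hline : HasDerivAt (fun t : ℝ => (t, p.2)) ((1, 0) : ℝ × E) p.1 :=
    (hasDerivAt_id' p.1).prodMk (hasDerivAt_const p.1 p.2)
  exact ((hdF.differentiableAt (hU.mem_nhds hp)).hasFDerivAt.comp_hasDerivAt p.1 hline).deriv

theorem ContDiffOn.iterate_deriv_fst {m : WithTop ℕ∞} (hU : IsOpen U) :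
    ∀ {k : ℕ} {F : ℝ × E → G}, ContDiffOn ℝ (m + k) F U →
      ContDiffOn ℝ m (fun p : ℝ × E => deriv^[k] (fun t => F (t, p.2)) p.1) U
  | 0, _, hF => by simpa using hF
  | k + 1, F, hF => by
    have hF' : ContDiffOn ℝ (m + k + 1) F U := by rwa [add_assoc, ← Nat.cast_one, ← Nat.cast_add]
    simpa only [Function.iterate_succ_apply] using iterate_deriv_fst hU (hF'.deriv_fst_s16 hU)

end slice

section iterated

variable {β E : Type*} [MeasureSpace β] [SFinite (volume : Measure β)] [NormedAddCommGroup E]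
  [NormedSpace ℝ E] {a b : ℝ} {t : Set β} {f : ℝ × β → E}

theorem intervalIntegral_setIntegral_eq_setIntegral_prod (hab : a ≤ b)
    (hf : IntegrableOn f (Ioc a b ×ˢ t)) :
    ∫ x in a..b, ∫ y in t, f (x, y) = ∫ p in Ioc a b ×ˢ t, f p := by
  rw [intervalIntegral.integral_of_le hab, Measure.volume_eq_prod, setIntegral_prod f hf]

theorem setIntegral_intervalIntegral_eq_setIntegral_prod (hab : a ≤ b)
    (hf : IntegrableOn f (Ioc a b ×ˢ t)) :
    ∫ y in t, ∫ x in a..b, f (x, y) = ∫ p in Ioc a b ×ˢ t, f p := by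
  rw [← intervalIntegral_integral_swap, intervalIntegral_setIntegral_eq_setIntegral_prod hab hf]
  rwa [uIoc_of_le hab, Measure.prod_restrict, ← Measure.volume_eq_prod]

theorem intervalIntegral_intervalIntegral_eq_setIntegral {c d : ℝ} {f : ℝ × ℝ → E} (hab : a ≤ b)
    (hcd : c ≤ d) (hf : IntegrableOn f (Ioc a b ×ˢ Ioc c d)) :
    ∫ x in a..b, ∫ y in c..d, f (x, y) = ∫ p in Ioc a b ×ˢ Ioc c d, f p := by
  simp_rw [intervalIntegral.integral_of_le hcd]
  exact intervalIntegral_setIntegral_eq_setIntegral_prod hab hf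

theorem intervalIntegral₃_eq_setIntegral {c d e g : ℝ} {f : ℝ × ℝ × ℝ → E} (hab : a ≤ b)
    (hcd : c ≤ d) (heg : e ≤ g) (hf : IntegrableOn f (Ioc a b ×ˢ Ioc c d ×ˢ Ioc e g)) :
    ∫ x in a..b, ∫ y in c..d, ∫ z in e..g, f (x, y, z) =
      ∫ p in Ioc a b ×ˢ Ioc c d ×ˢ Ioc e g, f p := by
  rw [← intervalIntegral_setIntegral_eq_setIntegral_prod hab hf]
  have hf' : Integrable f
      ((volume.restrict (Ioc a b)).prod (volume.restrict (Ioc c d ×ˢ Ioc e g))) := by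
    rwa [Measure.prod_restrict, ← Measure.volume_eq_prod]
  refine intervalIntegral.integral_congr_ae ?_
  rw [uIoc_of_le hab, ← ae_restrict_iff' measurableSet_Ioc]
  filter_upwards [hf'.prod_right_ae] with x hx
  exact intervalIntegral_intervalIntegral_eq_setIntegral hcd heg hx

end iterated

theorem stmt16_general (x0 x1 y0 y1 z0 z1 : ℝ) (hx : x0 < x1) (hy : y0 < y1) (hz : z0 < z1)
    (ex : ℝ)
    (hex : ex = x1 - x0)
    -- `u` is three times continuously differentiable on a neighborhood `U` of `T`
    (u : ℝ → ℝ → ℝ → ℝ) (U : Set (ℝ × ℝ × ℝ)) (hU : IsOpen U)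
    (hTU : Set.Icc x0 x1 ×ˢ Set.Icc y0 y1 ×ˢ Set.Icc z0 z1 ⊆ U)
    (hu : ContDiffOn ℝ 3 (fun p : ℝ × ℝ × ℝ => u p.1 p.2.1 p.2.2) U)
    (Kx : ℝ → ℝ)
    (hKx : ∀ x : ℝ, Kx x = ex ^ 2 * (x - x0) / 6 - ex * (x - x0) ^ 2 / 2 + (x - x0) ^ 3 / 3) :
    (∫ y in y0..y1, ∫ z in z0..z1, u x0 y z) + (∫ y in y0..y1, ∫ z in z0..z1, u x1 y z)
      = 2 / ex * (∫ x in x0..x1, ∫ y in y0..y1, ∫ z in z0..z1, u x y z)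
        + ex / 6 * (∫ x in x0..x1, ∫ y in y0..y1, ∫ z in z0..z1,
            deriv^[2] (fun t => u t y z) x)
        + 1 / ex * (∫ x in x0..x1, ∫ y in y0..y1, ∫ z in z0..z1,
            deriv^[3] (fun t => u t y z) x * Kx x) := by
  subst hex
  obtain rfl : Kx = trapezoidKernel x0 x1 := funext hKx
  set R := Ioc y0 y1 ×ˢ Ioc z0 z1
  set T := Icc x0 x1 ×ˢ Icc y0 y1 ×ˢ Icc z0 z1
  set D : ℕ → ℝ × ℝ × ℝ → ℝ := fun k p => deriv^[k] (fun t => u t p.2.1 p.2.2) p.1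
  have hD (k : ℕ) (hk : k ≤ 3) : ContinuousOn (D k) T :=
    ((hu.of_le (by rw [zero_add]; exact_mod_cast hk)).iterate_deriv_fst hU).continuousOn.mono hTU
  have integrable {g : ℝ × ℝ × ℝ → ℝ} (hg : ContinuousOn g T) : IntegrableOn g (Ioc x0 x1 ×ˢ R) :=
    (hg.integrableOn_compact (isCompact_Icc.prod (isCompact_Icc.prod isCompact_Icc))).mono_set
      (prod_mono Ioc_subset_Icc_self (prod_mono Ioc_subset_Icc_self Ioc_subset_Icc_self))
  have hface {x : ℝ} (hx : x ∈ Icc x0 x1) : IntegrableOn (fun q : ℝ × ℝ => u x q.1 q.2) R :=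
    (((hD 0 (by norm_num)).comp (by fun_prop : Continuous fun q : ℝ × ℝ => (x, q)).continuousOn
      fun q hq => ⟨hx, hq⟩).integrableOn_compact (isCompact_Icc.prod isCompact_Icc)).mono_set
        (prod_mono Ioc_subset_Icc_self Ioc_subset_Icc_self)
  have hD0 := integrable (hD 0 (by norm_num))
  have hD2 := integrable (hD 2 (by norm_num))
  have hD3K : IntegrableOn (fun p => D 3 p * trapezoidKernel x0 x1 p.1) (Ioc x0 x1 ×ˢ R) :=
    integrable <| (hD 3 le_rfl).mul
      ((continuous_trapezoidKernel x0 x1).comp continuous_fst).continuousOn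
  set H : ℝ × ℝ × ℝ → ℝ := fun p => 2 / (x1 - x0) * D 0 p + (x1 - x0) / 6 * D 2 p
    + 1 / (x1 - x0) * (D 3 p * trapezoidKernel x0 x1 p.1)
  have line : ∀ q ∈ R, u x0 q.1 q.2 + u x1 q.1 q.2 = ∫ x in x0..x1, H (x, q) := by
    intro q hq
    have hslice : ContDiff ℝ 3 fun t : ℝ => (t, q) := contDiff_id.prodMk contDiff_const
    exact (hu.comp hslice.contDiffOn (mapsTo_preimage _ U)).trapezoid_add_eq_intervalIntegral
      (hU.preimage hslice.continuous) hx.ne fun t ht =>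
        hTU ⟨uIcc_of_le hx.le ▸ ht, Ioc_subset_Icc_self hq.1, Ioc_subset_Icc_self hq.2⟩
  have hface₀ := hface (left_mem_Icc.2 hx.le)
  have hface₁ := hface (right_mem_Icc.2 hx.le)
  calc _ = (∫ q in R, u x0 q.1 q.2) + ∫ q in R, u x1 q.1 q.2 := by
        rw [← intervalIntegral_intervalIntegral_eq_setIntegral hy.le hz.le hface₀,
          ← intervalIntegral_intervalIntegral_eq_setIntegral hy.le hz.le hface₁]
    _ = ∫ q in R, ∫ x in x0..x1, H (x, q) := by
        rw [← integral_add hface₀ hface₁]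
        exact setIntegral_congr_fun (measurableSet_Ioc.prod measurableSet_Ioc) line
    _ = ∫ p in Ioc x0 x1 ×ˢ R, H p := setIntegral_intervalIntegral_eq_setIntegral_prod hx.le
        (((hD0.const_mul _).add (hD2.const_mul _)).add (hD3K.const_mul _))
    _ = _ := by
        simp only [H]
        rw [integral_add ?_ (hD3K.const_mul _),
          integral_add (hD0.const_mul _) (hD2.const_mul _), integral_const_mul, integral_const_mul,
          integral_const_mul, ← intervalIntegral₃_eq_setIntegral hx.le hy.le hz.le hD0,
          ← intervalIntegral₃_eq_setIntegral hx.le hy.le hz.le hD2,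
          ← intervalIntegral₃_eq_setIntegral hx.le hy.le hz.le hD3K]
        exacts [rfl, (hD0.const_mul _).add (hD2.const_mul _)]

theorem stmt16 (x0 x1 y0 y1 z0 z1 : ℝ) (hx : x0 < x1) (hy : y0 < y1) (hz : z0 < z1)
    (ex ey ez : ℝ)
    (hex : ex = x1 - x0) (hey : ey = y1 - y0) (hez : ez = z1 - z0)
    -- `u` is three times continuously differentiable on a neighborhood `U` of `T`
    (u : ℝ → ℝ → ℝ → ℝ) (U : Set (ℝ × ℝ × ℝ)) (hU : IsOpen U)
    (hTU : Set.Icc x0 x1 ×ˢ Set.Icc y0 y1 ×ˢ Set.Icc z0 z1 ⊆ U)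
    (hu : ContDiffOn ℝ 3 (fun p : ℝ × ℝ × ℝ => u p.1 p.2.1 p.2.2) U)
    (Kx : ℝ → ℝ)
    (hKx : ∀ x : ℝ, Kx x = ex ^ 2 * (x - x0) / 6 - ex * (x - x0) ^ 2 / 2 + (x - x0) ^ 3 / 3) :
    (∫ y in y0..y1, ∫ z in z0..z1, u x0 y z) + (∫ y in y0..y1, ∫ z in z0..z1, u x1 y z)
      = 2 / ex * (∫ x in x0..x1, ∫ y in y0..y1, ∫ z in z0..z1, u x y z)
        + ex / 6 * (∫ x in x0..x1, ∫ y in y0..y1, ∫ z in z0..z1,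
            deriv^[2] (fun t => u t y z) x)
        + 1 / ex * (∫ x in x0..x1, ∫ y in y0..y1, ∫ z in z0..z1,
            deriv^[3] (fun t => u t y z) x * Kx x) :=
  stmt16_general x0 x1 y0 y1 z0 z1 hx hy hz ex hex u U hU hTU hu Kx hKx
end
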